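/- arXiv:1110.3705 — 3 statements merged into one kernel-verified Lean document; each statement's English description precedes it below -/
import Mathlib

section
/- The operator a_LU defined by a_LU(W) = {v : ∃ v' ∈ W, v ⊑_LU v'} is an abstraction operator: for every set of valuations W, W ⊆ a_LU(W) and a_LU(a_LU(W)) = a_LU(W). -/
/-!
`⊑_LU` is a preorder and `a_LU` is downward closure along it: reflexivity gives `W ⊆ a_LU(W)`,
and transitivity gives `a_LU(a_LU(W)) ⊆ a_LU(W)`.
-/

open NNReal

/-- The LU-preorder on clock valuations. -/
def simLU {X : Type*} (L U : X → ℕ) (v v' : X → ℝ≥0) : Prop :=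
  ∀ x, (v' x < v x → (L x : ℝ≥0) < v' x) ∧ (v x < v' x → (U x : ℝ≥0) < v x)

/-- a_LU(W) = {v : ∃ v' ∈ W, v ⊑_LU v'}. -/
def aLU {X : Type*} (L U : X → ℕ) (W : Set (X → ℝ≥0)) : Set (X → ℝ≥0) :=
  {v | ∃ v' ∈ W, simLU L U v v'}

section

variable {X : Type*} (L U : X → ℕ)

theorem simLU_refl (v : X → ℝ≥0) : simLU L U v v :=
  fun _ => ⟨fun h => (lt_irrefl _ h).elim, fun h => (lt_irrefl _ h).elim⟩

theorem simLU_trans {a b c : X → ℝ≥0} (hab : simLU L U a b) (hbc : simLU L U b c) :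
    simLU L U a c := by
  intro x
  constructor
  · intro hca
    rcases lt_or_ge (c x) (b x) with hlt | hle
    · exact (hbc x).1 hlt
    · exact ((hab x).1 (hle.trans_lt hca)).trans_le hle
  · intro hac
    rcases lt_or_ge (a x) (b x) with hlt | hle
    · exact (hab x).2 hlt
    · exact ((hbc x).2 (hle.trans_lt hac)).trans_le hle

theorem subset_aLU (W : Set (X → ℝ≥0)) : W ⊆ aLU L U W :=
  fun v hv => ⟨v, hv, simLU_refl L U v⟩

theorem aLU_aLU (W : Set (X → ℝ≥0)) : aLU L U (aLU L U W) = aLU L U W := by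
  refine (subset_aLU L U _).antisymm' ?_
  rintro v ⟨v', ⟨w, hw, hv'w⟩, hvv'⟩
  exact ⟨w, hw, simLU_trans L U hvv' hv'w⟩

end

theorem aLU_abstraction_general {X : Type*} (L U : X → ℕ) (W : Set (X → ℝ≥0)) :
    W ⊆ aLU L U W ∧ aLU L U (aLU L U W) = aLU L U W :=
  ⟨subset_aLU L U W, aLU_aLU L U W⟩

/-- a_LU is an abstraction operator: W ⊆ a_LU(W) and a_LU(a_LU(W)) = a_LU(W). -/
theorem aLU_abstraction {X : Type*} [Fintype X] (L U : X → ℕ) (W : Set (X → ℝ≥0)) :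
    W ⊆ aLU L U W ∧ aLU L U (aLU L U W) = aLU L U W :=
  aLU_abstraction_general L U W
end

section
/- If v ⊑_LU v' then v' satisfies every LU-guard that v satisfies: for every clock x and integer c ≤ L(x), if c < v(x) (resp. c ≤ v(x)) then c < v'(x) (resp. c ≤ v'(x)); and for every c ≤ U(x), if v(x) < c (resp. v(x) ≤ c) then v'(x) < c (resp. v'(x) ≤ c). -/
open NNReal

namespace simLU

variable {X : Type*} {L U : X → ℕ} {v v' : X → ℝ≥0}

theorem le_apply_or_lt_apply (h : simLU L U v v') (x : X) : v x ≤ v' x ∨ (L x : ℝ≥0) < v' x :=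
  (le_or_gt (v x) (v' x)).imp_right (h x).1

theorem apply_le_or_lt_apply (h : simLU L U v v') (x : X) : v' x ≤ v x ∨ (U x : ℝ≥0) < v x :=
  (le_or_gt (v' x) (v x)).imp_right (h x).2

variable {c : ℝ≥0} {x : X}

theorem lt_apply_of_lt (h : simLU L U v v') (hc : c ≤ L x) (hv : c < v x) : c < v' x :=
  (h.le_apply_or_lt_apply x).elim hv.trans_le hc.trans_lt

theorem le_apply_of_le (h : simLU L U v v') (hc : c ≤ L x) (hv : c ≤ v x) : c ≤ v' x :=
  (h.le_apply_or_lt_apply x).elim hv.trans fun hL => (hc.trans_lt hL).le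

theorem apply_le_apply_of_le (h : simLU L U v v') (hc : c ≤ U x) (hv : v x ≤ c) : v' x ≤ v x :=
  (h.apply_le_or_lt_apply x).resolve_right (hv.trans hc).not_gt

theorem apply_lt_of_lt (h : simLU L U v v') (hc : c ≤ U x) (hv : v x < c) : v' x < c :=
  (h.apply_le_apply_of_le hc hv.le).trans_lt hv

theorem apply_le_of_le (h : simLU L U v v') (hc : c ≤ U x) (hv : v x ≤ c) : v' x ≤ c :=
  (h.apply_le_apply_of_le hc hv).trans hv

end simLU

theorem simLU_preserves_guards_general {X : Type*} (L U : X → ℕ)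
    (v v' : X → ℝ≥0) (h : simLU L U v v') :
    ∀ x, ∀ c : ℕ,
      (c ≤ L x →
        (((c : ℝ≥0) < v x → (c : ℝ≥0) < v' x) ∧ ((c : ℝ≥0) ≤ v x → (c : ℝ≥0) ≤ v' x))) ∧
      (c ≤ U x →
        ((v x < (c : ℝ≥0) → v' x < (c : ℝ≥0)) ∧ (v x ≤ (c : ℝ≥0) → v' x ≤ (c : ℝ≥0)))) := by
  intro x c
  refine ⟨fun hc => ?_, fun hc => ?_⟩
  · have hc : (c : ℝ≥0) ≤ L x := Nat.cast_le.mpr hc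
    exact ⟨h.lt_apply_of_lt hc, h.le_apply_of_le hc⟩
  · have hc : (c : ℝ≥0) ≤ U x := Nat.cast_le.mpr hc
    exact ⟨h.apply_lt_of_lt hc, h.apply_le_of_le hc⟩

/-- If v ⊑_LU v' then v' satisfies every LU-guard that v satisfies. -/
theorem simLU_preserves_guards {X : Type*} [Fintype X] (L U : X → ℕ)
    (v v' : X → ℝ≥0) (h : simLU L U v v') :
    ∀ x, ∀ c : ℕ,
      (c ≤ L x →
        (((c : ℝ≥0) < v x → (c : ℝ≥0) < v' x) ∧ ((c : ℝ≥0) ≤ v x → (c : ℝ≥0) ≤ v' x))) ∧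
      (c ≤ U x →
        ((v x < (c : ℝ≥0) → v' x < (c : ℝ≥0)) ∧ (v x ≤ (c : ℝ≥0) → v' x ≤ (c : ℝ≥0)))) :=
  simLU_preserves_guards_general L U v v' h
end

section
/- Valuations in the same neighbourhood satisfy the same difference constraints: if v₁ ∈ nbd(v) then for all clocks x, y, integers c and relation ◁ ∈ {<, ≤}: v(y) − v(x) ◁ c iff v₁(y) − v₁(x) ◁ c; and likewise v(x) ◁ c iff v₁(x) ◁ c. Consequently any zone containing v contains v₁. -/
/-- v₁ is in the neighbourhood of v (iff-form). -/
def nbd {X : Type*} (v v₁ : X → ℝ) : Prop :=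
  ∀ x y : X,
    ⌊v x⌋ = ⌊v₁ x⌋ ∧
    (Int.fract (v x) = 0 ↔ Int.fract (v₁ x) = 0) ∧
    (Int.fract (v x) < Int.fract (v y) ↔ Int.fract (v₁ x) < Int.fract (v₁ y)) ∧
    (Int.fract (v x) = Int.fract (v y) ↔ Int.fract (v₁ x) = Int.fract (v₁ y))

/-- An atomic zone constraint: `(i, j, strict, c)` means `ev(j) − ev(i) ◁ c`,
where `ev(none) = 0` and `ev(some x) = v(x)`.  This covers `y − x ◁ c`,
`x ◁ c` and `x ▷ c`. -/
def csat {X : Type*} (v : X → ℝ) : Option X × Option X × Bool × ℤ → Prop :=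
  fun p =>
    let ev : Option X → ℝ := fun o => o.elim 0 v
    if p.2.2.1 then ev p.2.1 - ev p.1 < (p.2.2.2 : ℝ) else ev p.2.1 - ev p.1 ≤ (p.2.2.2 : ℝ)

/-!
Write `b - a = (⌊b⌋ - ⌊a⌋) + (fract b - fract a)`. The second summand lies in `(-1, 1)`, so
whether `b - a < c` for an integer `c` is decided by the integer `⌊b⌋ - ⌊a⌋` and, when it equals
`c`, by the sign of `fract b - fract a`. Neighbouring valuations agree on all of these data, also
for the zero clock (the constant `0`, whose fractional part is minimal), which is how
`x ◁ c` and `x ▷ c` are handled.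
-/

theorem sub_lt_intCast_iff (a b : ℝ) (c : ℤ) :
    b - a < c ↔ ⌊b⌋ - ⌊a⌋ < c ∨ ⌊b⌋ - ⌊a⌋ = c ∧ Int.fract b < Int.fract a := by
  have ha := Int.floor_add_fract a
  have hb := Int.floor_add_fract b
  have := Int.fract_nonneg a
  have := Int.fract_nonneg b
  have := Int.fract_lt_one a
  have := Int.fract_lt_one b
  rcases lt_trichotomy (⌊b⌋ - ⌊a⌋) c with hlt | rfl | hgt
  · have hcast : ((⌊b⌋ - ⌊a⌋ + 1 : ℤ) : ℝ) ≤ c := by exact_mod_cast hlt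
    push_cast at hcast
    simp only [hlt, true_or, iff_true]
    linarith
  · push_cast
    simp only [lt_irrefl, true_and, false_or]
    constructor <;> intro <;> linarith
  · have hcast : ((c + 1 : ℤ) : ℝ) ≤ ⌊b⌋ - ⌊a⌋ := by exact_mod_cast hgt
    push_cast at hcast
    simp only [hgt.not_gt, hgt.ne', false_and, or_self, iff_false, not_lt]
    linarith

theorem sub_lt_intCast_iff_of_floor_eq {a b a' b' : ℝ} (ha : ⌊a⌋ = ⌊a'⌋) (hb : ⌊b⌋ = ⌊b'⌋)
    (hfract : Int.fract b < Int.fract a ↔ Int.fract b' < Int.fract a') (c : ℤ) :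
    b - a < c ↔ b' - a' < c := by
  rw [sub_lt_intCast_iff, sub_lt_intCast_iff, ha, hb, hfract]

theorem sub_le_intCast_iff_of_floor_eq {a b a' b' : ℝ} (ha : ⌊a⌋ = ⌊a'⌋) (hb : ⌊b⌋ = ⌊b'⌋)
    (hfract : Int.fract a < Int.fract b ↔ Int.fract a' < Int.fract b') (c : ℤ) :
    b - a ≤ c ↔ b' - a' ≤ c := by
  have flip (p q : ℝ) : p - q ≤ c ↔ ¬q - p < ((-c : ℤ) : ℝ) := by
    push_cast
    constructor <;> intro <;> linarith
  rw [flip, flip, sub_lt_intCast_iff_of_floor_eq hb ha hfract]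

namespace nbd

variable {X : Type*} {v v₁ : X → ℝ}

theorem option_elim (h : nbd v v₁) :
    nbd (fun o : Option X => o.elim 0 v) (fun o => o.elim 0 v₁) := by
  rintro (_ | x) (_ | y)
  · simp
  · simp [(Int.fract_nonneg _).lt_iff_ne', eq_comm (a := (0 : ℝ)), (h y y).2.1]
  · simp [(Int.fract_nonneg _).not_gt, h x x]
  · exact h x y

theorem sub_lt_iff (h : nbd v v₁) (x y : X) (c : ℤ) : v y - v x < c ↔ v₁ y - v₁ x < c :=
  sub_lt_intCast_iff_of_floor_eq (h x x).1 (h y y).1 (h y x).2.2.1 c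

theorem sub_le_iff (h : nbd v v₁) (x y : X) (c : ℤ) : v y - v x ≤ c ↔ v₁ y - v₁ x ≤ c :=
  sub_le_intCast_iff_of_floor_eq (h x x).1 (h y y).1 (h x y).2.2.1 c

theorem csat_iff (h : nbd v v₁) (cst : Option X × Option X × Bool × ℤ) :
    csat v cst ↔ csat v₁ cst := by
  obtain ⟨i, j, strict, c⟩ := cst
  cases strict
  · exact h.option_elim.sub_le_iff i j c
  · exact h.option_elim.sub_lt_iff i j c

end nbd

theorem nbd_same_constraints_general {X : Type*}
    (v v₁ : X → ℝ)
    (h : nbd v v₁) :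
    (∀ x y : X, ∀ c : ℤ,
      ((v y - v x < (c : ℝ)) ↔ (v₁ y - v₁ x < (c : ℝ))) ∧
      ((v y - v x ≤ (c : ℝ)) ↔ (v₁ y - v₁ x ≤ (c : ℝ)))) ∧
    (∀ x : X, ∀ c : ℤ,
      ((v x < (c : ℝ)) ↔ (v₁ x < (c : ℝ))) ∧
      ((v x ≤ (c : ℝ)) ↔ (v₁ x ≤ (c : ℝ)))) ∧
    (∀ l : List (Option X × Option X × Bool × ℤ),
      (∀ cst ∈ l, csat v cst) → ∀ cst ∈ l, csat v₁ cst) := by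
  refine ⟨fun x y c => ⟨h.sub_lt_iff x y c, h.sub_le_iff x y c⟩, fun x c => ?_,
    fun l hl cst hcst => (h.csat_iff cst).1 (hl cst hcst)⟩
  simpa using And.intro (h.option_elim.sub_lt_iff none (some x) c)
    (h.option_elim.sub_le_iff none (some x) c)

/-- Valuations in the same neighbourhood satisfy the same difference constraints;
consequently any zone containing v contains v₁. -/
theorem nbd_same_constraints {X : Type*} [Fintype X]
    (v v₁ : X → ℝ) (hv : ∀ x, 0 ≤ v x) (hv₁ : ∀ x, 0 ≤ v₁ x)
    (h : nbd v v₁) :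
    (∀ x y : X, ∀ c : ℤ,
      ((v y - v x < (c : ℝ)) ↔ (v₁ y - v₁ x < (c : ℝ))) ∧
      ((v y - v x ≤ (c : ℝ)) ↔ (v₁ y - v₁ x ≤ (c : ℝ)))) ∧
    (∀ x : X, ∀ c : ℤ,
      ((v x < (c : ℝ)) ↔ (v₁ x < (c : ℝ))) ∧
      ((v x ≤ (c : ℝ)) ↔ (v₁ x ≤ (c : ℝ)))) ∧
    (∀ l : List (Option X × Option X × Bool × ℤ),
      (∀ cst ∈ l, csat v cst) → ∀ cst ∈ l, csat v₁ cst) :=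
  nbd_same_constraints_general v v₁ h
end
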